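/- Let U⊆ℝ×ℝⁿ be open and d: U→ℝ of class C¹ such that the spatial gradient ∇ₓd is of class C¹ on U and ‖∇ₓd(t,x)‖=1 for all (t,x)∈U. Define w(t,x) = −∂ₜd(t,x)·∇ₓd(t,x). Then for every (t₀,x₀)∈U with d(t₀,x₀)=0 there exists δ>0 such that the initial value problem ẏ(t)=w(t,y(t)), y(t₀)=x₀ has exactly one solution y on (t₀−δ,t₀+δ), and this solution satisfies d(t,y(t))=0 for all t∈(t₀−δ,t₀+δ). -/

import Mathlib

set_option maxHeartbeats 1000000


open MeasureTheory Set Metric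
open NNReal Filter Topology

noncomputable section

/-- `x` is absolutely continuous on `I ⊆ ℝ`: it is an indefinite integral of an
integrable function. -/
def AbsContOn {E : Type*} [NormedAddCommGroup E] [NormedSpace ℝ E] [CompleteSpace E]
    (x : ℝ → E) (I : Set ℝ) : Prop :=
  ∃ x' : ℝ → E, IntegrableOn x' I ∧ ∀ s ∈ I, ∀ t ∈ I, x t = x s + ∫ u in s..t, x' u

/-- `y` is an absolutely continuous solution of `ẏ = w(t,y)`, `y(t₀) = x₀`, on
`(t₀-δ, t₀+δ)`, with graph in `U`. -/
def IsIVPSol {n : ℕ} (U : Set (ℝ × EuclideanSpace ℝ (Fin n)))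
    (w : ℝ → EuclideanSpace ℝ (Fin n) → EuclideanSpace ℝ (Fin n))
    (t₀ : ℝ) (x₀ : EuclideanSpace ℝ (Fin n)) (δ : ℝ)
    (y : ℝ → EuclideanSpace ℝ (Fin n)) : Prop :=
  y t₀ = x₀ ∧ (∀ t ∈ Ioo (t₀ - δ) (t₀ + δ), (t, y t) ∈ U) ∧
    AbsContOn y (Ioo (t₀ - δ) (t₀ + δ)) ∧
    ∀ᵐ t ∂(volume.restrict (Ioo (t₀ - δ) (t₀ + δ))), HasDerivAt y (w t (y t)) t

section Aux


variable {n : ℕ} {U : Set (ℝ × EuclideanSpace ℝ (Fin n))}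
  {d : ℝ × EuclideanSpace ℝ (Fin n) → ℝ}
  {w : ℝ → EuclideanSpace ℝ (Fin n) → EuclideanSpace ℝ (Fin n)}

/-- spatial gradient as a function of the spacetime point -/
def auxG (d : ℝ × EuclideanSpace ℝ (Fin n) → ℝ) (q : ℝ × EuclideanSpace ℝ (Fin n)) :
    EuclideanSpace ℝ (Fin n) := gradient (fun y => d (q.1, y)) q.2

/-- time partial derivative (via the full Fréchet derivative) -/
def auxF (d : ℝ × EuclideanSpace ℝ (Fin n) → ℝ) (q : ℝ × EuclideanSpace ℝ (Fin n)) : ℝ :=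
  fderiv ℝ d q (1, 0)

lemma aux_hasDerivAt_time (hU : IsOpen U) (hd : ContDiffOn ℝ 1 d U)
    {p : ℝ × EuclideanSpace ℝ (Fin n)} (hp : p ∈ U) :
    HasDerivAt (fun s => d (s, p.2)) (fderiv ℝ d p (1, 0)) p.1 := by
  have hdiff : DifferentiableAt ℝ d p :=
    (hd.contDiffAt (hU.mem_nhds hp)).differentiableAt one_ne_zero
  have h1 : HasDerivAt (fun s : ℝ => (s, p.2)) ((1:ℝ), (0 : EuclideanSpace ℝ (Fin n))) p.1 :=
    (hasDerivAt_id p.1).prodMk (hasDerivAt_const p.1 p.2)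
  have h2 : HasFDerivAt d (fderiv ℝ d p) (p.1, p.2) := by
    rw [Prod.mk.eta]; exact hdiff.hasFDerivAt
  exact h2.comp_hasDerivAt p.1 h1

lemma aux_gradient (hU : IsOpen U) (hd : ContDiffOn ℝ 1 d U)
    {p : ℝ × EuclideanSpace ℝ (Fin n)} (hp : p ∈ U) :
    HasGradientAt (fun y => d (p.1, y)) (gradient (fun y => d (p.1, y)) p.2) p.2 ∧
    ∀ v, (inner ℝ (gradient (fun y => d (p.1, y)) p.2) v : ℝ) = fderiv ℝ d p (0, v) := by
  have hdiff : DifferentiableAt ℝ d p :=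
    (hd.contDiffAt (hU.mem_nhds hp)).differentiableAt one_ne_zero
  have h1 : HasFDerivAt (fun y : EuclideanSpace ℝ (Fin n) => (p.1, y))
      ((0 : EuclideanSpace ℝ (Fin n) →L[ℝ] ℝ).prod (ContinuousLinearMap.id ℝ _)) p.2 :=
    (hasFDerivAt_const p.1 p.2).prodMk (hasFDerivAt_id p.2)
  have h2 : HasFDerivAt d (fderiv ℝ d p) (p.1, p.2) := by
    rw [Prod.mk.eta]; exact hdiff.hasFDerivAt
  have h3 : HasFDerivAt (fun y => d (p.1, y))
      ((fderiv ℝ d p).comp ((0 : EuclideanSpace ℝ (Fin n) →L[ℝ] ℝ).prod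
        (ContinuousLinearMap.id ℝ _))) p.2 := h2.comp p.2 h1
  have h4 := h3.hasGradientAt
  have h5 : gradient (fun y => d (p.1, y)) p.2 = (InnerProductSpace.toDual ℝ _).symm
      ((fderiv ℝ d p).comp ((0 : EuclideanSpace ℝ (Fin n) →L[ℝ] ℝ).prod
        (ContinuousLinearMap.id ℝ _))) := h4.gradient
  constructor
  · rw [h5]; exact h4
  · intro v
    rw [h5, InnerProductSpace.toDual_symm_apply]
    simp

lemma aux_w_eq (hU : IsOpen U) (hd : ContDiffOn ℝ 1 d U)
    (hw : ∀ t x, w t x = (-(deriv (fun s => d (s, x)) t)) • gradient (fun y => d (t, y)) x)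
    {p : ℝ × EuclideanSpace ℝ (Fin n)} (hp : p ∈ U) :
    w p.1 p.2 = (-(fderiv ℝ d p (1, 0))) • gradient (fun y => d (p.1, y)) p.2 := by
  rw [hw p.1 p.2, (aux_hasDerivAt_time hU hd hp).deriv]

lemma aux_contVelF (hU : IsOpen U) (hd : ContDiffOn ℝ 1 d U)
    (hgradC1 : ContDiffOn ℝ 1 (fun p : ℝ × EuclideanSpace ℝ (Fin n) =>
      gradient (fun y => d (p.1, y)) p.2) U) :
    ContinuousOn (fun p : ℝ × EuclideanSpace ℝ (Fin n) =>
      (-(fderiv ℝ d p (1, 0))) • gradient (fun y => d (p.1, y)) p.2) U := by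
  have h1 : ContinuousOn (fun p : ℝ × EuclideanSpace ℝ (Fin n) => fderiv ℝ d p (1, 0)) U :=
    (hd.continuousOn_fderiv_of_isOpen hU le_rfl).clm_apply continuousOn_const
  exact h1.neg.smul hgradC1.continuousOn

lemma aux_contG (hU : IsOpen U) (hd : ContDiffOn ℝ 1 d U)
    (hgradC1 : ContDiffOn ℝ 1 (fun p : ℝ × EuclideanSpace ℝ (Fin n) =>
      gradient (fun y => d (p.1, y)) p.2) U)
    (hw : ∀ t x, w t x = (-(deriv (fun s => d (s, x)) t)) • gradient (fun y => d (t, y)) x)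
    {z : ℝ → EuclideanSpace ℝ (Fin n)} {s : Set ℝ} (hs : IsOpen s)
    (hzc : ContinuousOn z s) (hzU : ∀ t ∈ s, (t, z t) ∈ U) :
    ContinuousOn (fun t => w t (z t)) s := by
  intro u hu
  apply ContinuousAt.continuousWithinAt
  have h1 : ContinuousAt (fun t => (t, z t)) u :=
    continuousAt_id.prodMk (hzc.continuousAt (hs.mem_nhds hu))
  have h2 : ContinuousAt (fun p : ℝ × EuclideanSpace ℝ (Fin n) =>
      (-(fderiv ℝ d p (1, 0))) • gradient (fun y => d (p.1, y)) p.2) (u, z u) :=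
    (aux_contVelF hU hd hgradC1).continuousAt (hU.mem_nhds (hzU u hu))
  have h3 : ContinuousAt ((fun p : ℝ × EuclideanSpace ℝ (Fin n) =>
      (-(fderiv ℝ d p (1, 0))) • gradient (fun y => d (p.1, y)) p.2) ∘ (fun t => (t, z t))) u :=
    ContinuousAt.comp h2 h1
  apply h3.congr
  have h4 : ∀ᶠ t in 𝓝 u, (t, z t) ∈ U := h1.preimage_mem_nhds (hU.mem_nhds (hzU u hu))
  filter_upwards [h4] with t ht
  exact (aux_w_eq hU hd hw ht).symm


lemma aux_localData (hU : IsOpen U) (hd : ContDiffOn ℝ 1 d U)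
    (hgradC1 : ContDiffOn ℝ 1 (fun p : ℝ × EuclideanSpace ℝ (Fin n) =>
      gradient (fun y => d (p.1, y)) p.2) U)
    (hunit : ∀ p ∈ U, ‖gradient (fun y => d (p.1, y)) p.2‖ = 1)
    (hw : ∀ t x, w t x = (-(deriv (fun s => d (s, x)) t)) • gradient (fun y => d (t, y)) x)
    {p : ℝ × EuclideanSpace ℝ (Fin n)} (hp : p ∈ U) :
    ∃ ρ > (0:ℝ), ∃ L : ℝ≥0, ∃ C : ℝ, 0 ≤ C ∧
      closedBall p.1 ρ ×ˢ closedBall p.2 ρ ⊆ U ∧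
      (∀ t ∈ closedBall p.1 ρ, LipschitzOnWith L (w t) (closedBall p.2 ρ)) ∧
      (∀ q ∈ closedBall p.1 ρ ×ˢ closedBall p.2 ρ, ‖w q.1 q.2‖ ≤ C) ∧
      (∀ x ∈ closedBall p.2 ρ, ContinuousOn (fun t => w t x) (closedBall p.1 ρ)) := by
  -- basic ball inside U
  obtain ⟨r1, hr1, hKU⟩ : ∃ r1 > 0, closedBall p r1 ⊆ U :=
    (Metric.nhds_basis_closedBall.mem_iff).1 (hU.mem_nhds hp)
  set K : Set (ℝ × EuclideanSpace ℝ (Fin n)) := closedBall p r1 with hK_def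
  have hKcomp : IsCompact K := isCompact_closedBall p r1
  have hKconv : Convex ℝ K := convex_closedBall p r1
  -- bound on fderiv of g on K
  obtain ⟨M₀, hM₀⟩ := hKcomp.exists_bound_of_continuousOn
    ((hgradC1.continuousOn_fderiv_of_isOpen hU le_rfl).mono hKU)
  set M : ℝ := max M₀ 0 with hM_def
  have hM0 : 0 ≤ M := le_max_right _ _
  -- g is M-Lipschitz on K
  have hgLip : ∀ q ∈ K, ∀ q' ∈ K, ‖auxG d q - auxG d q'‖ ≤ M * dist q q' := by
    intro q hq q' hq'
    have := Convex.norm_image_sub_le_of_norm_hasFDerivWithin_le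
      (f := auxG d) (f' := fun q => fderiv ℝ (auxG d) q) (s := K) (C := M)
      (fun x hx => ((hgradC1.contDiffAt (hU.mem_nhds (hKU hx))).differentiableAt
        one_ne_zero).hasFDerivAt.hasFDerivWithinAt)
      (fun x hx => le_trans (hM₀ x hx) (le_max_left _ _)) hKconv hq' hq
    rwa [dist_eq_norm]
  -- bound on |f| on K
  obtain ⟨C₀, hC₀⟩ := hKcomp.exists_bound_of_continuousOn
    (((hd.continuousOn_fderiv_of_isOpen hU le_rfl).clm_apply continuousOn_const).mono hKU)
  set C₁ : ℝ := max C₀ 0 with hC₁_def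
  have hC₁0 : 0 ≤ C₁ := le_max_right _ _
  have hC₁ : ∀ q ∈ K, |auxF d q| ≤ C₁ := fun q hq =>
    le_trans (le_of_eq (Real.norm_eq_abs _).symm) (le_trans (hC₀ q hq) (le_max_left _ _))
  set ρ : ℝ := r1 / 2 with hρ_def
  have hρ : 0 < ρ := by positivity
  have hcyl_eq : closedBall p.1 ρ ×ˢ closedBall p.2 ρ = closedBall p ρ := by
    rw [← Prod.mk.eta (p := p), closedBall_prod_same]
  have hcylU : closedBall p.1 ρ ×ˢ closedBall p.2 ρ ⊆ U := by
    rw [hcyl_eq]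
    exact (closedBall_subset_closedBall (by linarith)).trans hKU
  -- mixed points in K
  have hmix : ∀ τ ∈ closedBall p.1 r1, ∀ ξ ∈ closedBall p.2 ρ,
      (τ, ξ) ∈ K := by
    intro τ hτ ξ hξ
    have : (τ, ξ) ∈ closedBall p.1 r1 ×ˢ closedBall p.2 r1 :=
      Set.mk_mem_prod hτ (closedBall_subset_closedBall (by linarith) hξ)
    rwa [← Prod.mk.eta (p := p), closedBall_prod_same] at this
  -- f is Lipschitz in x, uniformly for t in the small ball
  have hfLip : ∀ t ∈ closedBall p.1 ρ, ∀ x ∈ closedBall p.2 ρ, ∀ x' ∈ closedBall p.2 ρ,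
      |auxF d (t, x) - auxF d (t, x')| ≤ M * ‖x - x'‖ := by
    intro t ht x hx x' hx'
    have htK : t ∈ closedBall p.1 r1 := closedBall_subset_closedBall (by linarith) ht
    -- the difference estimate
    have hΦ : ∀ τ ∈ closedBall p.1 r1, ∀ τ' ∈ closedBall p.1 r1,
        |(d (τ, x) - d (τ', x)) - (d (τ, x') - d (τ', x'))| ≤ (M * |τ - τ'|) * ‖x - x'‖ := by
      intro τ hτ τ' hτ'
      have hder : ∀ ξ ∈ closedBall p.2 ρ,
          HasFDerivWithinAt (fun ξ => d (τ, ξ) - d (τ', ξ))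
            ((InnerProductSpace.toDual ℝ _) (auxG d (τ, ξ)) -
             (InnerProductSpace.toDual ℝ _) (auxG d (τ', ξ))) (closedBall p.2 ρ) ξ := by
        intro ξ hξ
        have h1 := ((aux_gradient hU hd (hKU (hmix τ hτ ξ hξ))).1).hasFDerivAt
        have h2 := ((aux_gradient hU hd (hKU (hmix τ' hτ' ξ hξ))).1).hasFDerivAt
        exact (h1.sub h2).hasFDerivWithinAt
      have hbound : ∀ ξ ∈ closedBall p.2 ρ,
          ‖(InnerProductSpace.toDual ℝ _) (auxG d (τ, ξ)) -
           (InnerProductSpace.toDual ℝ _) (auxG d (τ', ξ))‖ ≤ M * |τ - τ'| := by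
        intro ξ hξ
        rw [← map_sub, LinearIsometryEquiv.norm_map]
        have := hgLip (τ, ξ) (hmix τ hτ ξ hξ) (τ', ξ) (hmix τ' hτ' ξ hξ)
        have hdist : dist ((τ, ξ) : ℝ × EuclideanSpace ℝ (Fin n)) (τ', ξ) = |τ - τ'| := by
          rw [Prod.dist_eq]; simp [Real.dist_eq]
        rwa [hdist] at this
      have := Convex.norm_image_sub_le_of_norm_hasFDerivWithin_le hder hbound
        (convex_closedBall _ _) hx' hx
      simp only [Real.norm_eq_abs] at this
      exact this
    -- derivative of the difference in time
    have hψ1 := aux_hasDerivAt_time hU hd (hcylU (Set.mk_mem_prod ht hx))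
    have hψ2 := aux_hasDerivAt_time hU hd (hcylU (Set.mk_mem_prod ht hx'))
    have hψ : HasDerivAt (fun s => d (s, x) - d (s, x')) (auxF d (t, x) - auxF d (t, x')) t := hψ1.sub hψ2
    have hslope := hasDerivAt_iff_tendsto_slope.1 hψ
    have hb : ∀ᶠ s in 𝓝[≠] t, ‖slope (fun s => d (s, x) - d (s, x')) t s‖ ≤ M * ‖x - x'‖ := by
      have hmem : Icc (t - ρ) (t + ρ) ∈ 𝓝 t := Icc_mem_nhds (by linarith) (by linarith)
      filter_upwards [nhdsWithin_le_nhds hmem, self_mem_nhdsWithin] with s hs hsne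
      have hsne' : s ≠ t := hsne
      have hsK : s ∈ closedBall p.1 r1 := by
        rw [mem_closedBall, Real.dist_eq]
        rw [mem_closedBall, Real.dist_eq] at ht
        rw [mem_Icc] at hs
        rw [abs_le] at ht ⊢
        constructor <;> [skip; skip] <;> cases' ht with h1 h2 <;>
        · simp only [hρ_def] at hs ⊢; cases' hs with h3 h4; linarith
      have h1 : |((fun s => d (s, x) - d (s, x')) s - (fun s => d (s, x) - d (s, x')) t)|
          ≤ M * |s - t| * ‖x - x'‖ := by
        have := hΦ s hsK t htK
        have heq : (fun s => d (s, x) - d (s, x')) s - (fun s => d (s, x) - d (s, x')) t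
            = (d (s, x) - d (t, x)) - (d (s, x') - d (t, x')) := by simp; ring
        rw [heq]
        calc |(d (s, x) - d (t, x)) - (d (s, x') - d (t, x'))| ≤ (M * |s - t|) * ‖x - x'‖ := this
          _ = M * |s - t| * ‖x - x'‖ := by ring
      rw [slope_def_module, norm_smul, norm_inv, Real.norm_eq_abs]
      have habs : 0 < |s - t| := abs_pos.2 (sub_ne_zero.2 hsne')
      calc |s - t|⁻¹ * ‖(fun s => d (s, x) - d (s, x')) s - (fun s => d (s, x) - d (s, x')) t‖
          ≤ |s - t|⁻¹ * (M * |s - t| * ‖x - x'‖) := by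
            apply mul_le_mul_of_nonneg_left _ (inv_nonneg.2 habs.le)
            rw [Real.norm_eq_abs]; exact h1
        _ = M * ‖x - x'‖ := by field_simp
    have := le_of_tendsto hslope.norm hb
    rwa [Real.norm_eq_abs] at this
  -- Lipschitz constant for w
  set Lr : ℝ := M * (1 + C₁) with hLr_def
  have hLr0 : 0 ≤ Lr := by positivity
  refine ⟨ρ, hρ, Real.toNNReal Lr, C₁, hC₁0, hcylU, ?_, ?_, ?_⟩
  · -- Lipschitz
    intro t ht
    apply LipschitzOnWith.of_dist_le_mul
    intro x hx x' hx'
    have hqU : ((t, x) : ℝ × EuclideanSpace ℝ (Fin n)) ∈ U := hcylU (Set.mk_mem_prod ht hx)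
    have hq'U : ((t, x') : ℝ × EuclideanSpace ℝ (Fin n)) ∈ U := hcylU (Set.mk_mem_prod ht hx')
    have hqK : ((t, x) : ℝ × EuclideanSpace ℝ (Fin n)) ∈ K :=
      hmix t (closedBall_subset_closedBall (by linarith) ht) x hx
    have hq'K : ((t, x') : ℝ × EuclideanSpace ℝ (Fin n)) ∈ K :=
      hmix t (closedBall_subset_closedBall (by linarith) ht) x' hx'
    rw [dist_eq_norm, aux_w_eq hU hd hw hqU, aux_w_eq hU hd hw hq'U]
    have hiden : (-(auxF d (t, x))) • auxG d (t, x) - (-(auxF d (t, x'))) • auxG d (t, x')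
        = (auxF d (t, x') - auxF d (t, x)) • auxG d (t, x) + (-(auxF d (t, x'))) • (auxG d (t, x) - auxG d (t, x')) := by
      module
    have hgd : dist ((t, x) : ℝ × EuclideanSpace ℝ (Fin n)) (t, x') = ‖x - x'‖ := by
      rw [Prod.dist_eq]; simp [dist_eq_norm]
    calc ‖(-(auxF d (t, x))) • auxG d (t, x) - (-(auxF d (t, x'))) • auxG d (t, x')‖
        = ‖(auxF d (t, x') - auxF d (t, x)) • auxG d (t, x) + (-(auxF d (t, x'))) • (auxG d (t, x) - auxG d (t, x'))‖ := by
          rw [hiden]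
      _ ≤ ‖(auxF d (t, x') - auxF d (t, x)) • auxG d (t, x)‖ + ‖(-(auxF d (t, x'))) • (auxG d (t, x) - auxG d (t, x'))‖ :=
          norm_add_le _ _
      _ = |auxF d (t, x') - auxF d (t, x)| * ‖auxG d (t, x)‖ + |auxF d (t, x')| * ‖auxG d (t, x) - auxG d (t, x')‖ := by
          rw [norm_smul, norm_smul, Real.norm_eq_abs, Real.norm_eq_abs, abs_neg]
      _ ≤ M * ‖x - x'‖ * 1 + C₁ * (M * ‖x - x'‖) := by
          apply add_le_add
          · have hg1 : ‖auxG d (t, x)‖ = 1 := hunit (t, x) hqU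
            rw [hg1]
            have h := hfLip t ht x hx x' hx'
            rw [abs_sub_comm] at h
            simpa using h
          · have h2 : ‖auxG d (t, x) - auxG d (t, x')‖ ≤ M * ‖x - x'‖ := by
              have := hgLip _ hqK _ hq'K
              rwa [hgd] at this
            exact mul_le_mul (hC₁ _ hq'K) h2 (norm_nonneg _) hC₁0
      _ ≤ Lr * ‖x - x'‖ := by rw [hLr_def]; ring_nf; nlinarith [norm_nonneg (x - x'), hM0, hC₁0]
      _ = (Real.toNNReal Lr : ℝ) * dist x x' := by
          rw [Real.coe_toNNReal _ hLr0, dist_eq_norm]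
  · -- bound
    intro q hq
    have hqU : q ∈ U := hcylU hq
    rw [aux_w_eq hU hd hw hqU, norm_smul, Real.norm_eq_abs, abs_neg, hunit q hqU, mul_one]
    have hqK : q ∈ K := by
      rw [hK_def]
      exact closedBall_subset_closedBall (by linarith) (hcyl_eq ▸ hq)
    exact hC₁ q hqK
  · -- continuity in t
    intro x hx
    have hmaps : ∀ t ∈ closedBall p.1 ρ, ((t, x) : ℝ × EuclideanSpace ℝ (Fin n)) ∈ U :=
      fun t ht => hcylU (Set.mk_mem_prod ht hx)
    have h1 : ContinuousOn ((fun q : ℝ × EuclideanSpace ℝ (Fin n) =>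
        (-(fderiv ℝ d q (1, 0))) • gradient (fun y => d (q.1, y)) q.2) ∘ (fun t => (t, x)))
        (closedBall p.1 ρ) :=
      (aux_contVelF hU hd hgradC1).comp
        ((continuous_id.prodMk continuous_const).continuousOn) hmaps
    exact h1.congr fun t ht => aux_w_eq hU hd hw (hmaps t ht)


lemma aux_upgrade (hU : IsOpen U) (hd : ContDiffOn ℝ 1 d U)
    (hgradC1 : ContDiffOn ℝ 1 (fun p : ℝ × EuclideanSpace ℝ (Fin n) =>
      gradient (fun y => d (p.1, y)) p.2) U)
    (hw : ∀ t x, w t x = (-(deriv (fun s => d (s, x)) t)) • gradient (fun y => d (t, y)) x)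
    {t₀ : ℝ} {x₀ : EuclideanSpace ℝ (Fin n)} {δ : ℝ} {z : ℝ → EuclideanSpace ℝ (Fin n)}
    (hz : IsIVPSol U w t₀ x₀ δ z) :
    ContinuousOn z (Ioo (t₀ - δ) (t₀ + δ)) ∧
      ∀ t ∈ Ioo (t₀ - δ) (t₀ + δ), HasDerivAt z (w t (z t)) t := by
  obtain ⟨hz0, hzU, ⟨x', hx'int, hx'eq⟩, hzae⟩ := hz
  -- continuity of z
  have hzcont : ContinuousOn z (Ioo (t₀ - δ) (t₀ + δ)) := by
    intro u hu
    apply ContinuousAt.continuousWithinAt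
    obtain ⟨ρu, hρu0, hρuJ⟩ := Metric.nhds_basis_closedBall.mem_iff.1 (isOpen_Ioo.mem_nhds hu)
    have hIccJ : Icc (u - ρu) (u + ρu) ⊆ Ioo (t₀ - δ) (t₀ + δ) := by
      rw [← Real.closedBall_eq_Icc]; exact hρuJ
    have hle : u - ρu ≤ u + ρu := by linarith
    have hint : IntegrableOn x' (uIcc (u - ρu) (u + ρu)) volume := by
      rw [uIcc_of_le hle]; exact hx'int.mono_set hIccJ
    have hcontP : ContinuousOn (fun t => ∫ s in (u - ρu)..t, x' s) (Icc (u - ρu) (u + ρu)) := by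
      have := intervalIntegral.continuousOn_primitive_interval hint
      rwa [uIcc_of_le hle] at this
    have haJ : u - ρu ∈ Ioo (t₀ - δ) (t₀ + δ) := hIccJ ⟨le_rfl, by linarith⟩
    have hzc : ContinuousOn z (Icc (u - ρu) (u + ρu)) := by
      apply ContinuousOn.congr (continuousOn_const.add hcontP)
      intro t ht
      exact hx'eq (u - ρu) haJ t (hIccJ ht)
    exact (hzc.continuousWithinAt ⟨by linarith, by linarith⟩).continuousAt
      (Icc_mem_nhds (by linarith) (by linarith))
  have hG : ContinuousOn (fun t => w t (z t)) (Ioo (t₀ - δ) (t₀ + δ)) :=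
    aux_contG hU hd hgradC1 hw isOpen_Ioo hzcont hzU
  -- a.e. identification of x' with w t (z t)
  have hae2 : ∀ᵐ u : ℝ, u ∈ Ioo (t₀ - δ) (t₀ + δ) → x' u = w u (z u) := by
    have hzae' : ∀ᵐ u : ℝ, u ∈ Ioo (t₀ - δ) (t₀ + δ) → HasDerivAt z (w u (z u)) u :=
      ae_imp_of_ae_restrict hzae
    have hind : Integrable ((Ioo (t₀ - δ) (t₀ + δ)).indicator x') volume :=
      hx'int.integrable_indicator measurableSet_Ioo
    have hLeb := IsUnifLocDoublingMeasure.ae_tendsto_average (μ := (volume : Measure ℝ))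
      hind.locallyIntegrable 1
    filter_upwards [hzae', hLeb] with u hu1 hu2
    intro huJ
    obtain ⟨ρu, hρu0, hρuJ⟩ := Metric.nhds_basis_closedBall.mem_iff.1 (isOpen_Ioo.mem_nhds huJ)
    have hT1 : Filter.Tendsto (fun r : ℝ => ⨍ y in closedBall u r,
        (Ioo (t₀ - δ) (t₀ + δ)).indicator x' y) (𝓝[>] 0)
        (𝓝 ((Ioo (t₀ - δ) (t₀ + δ)).indicator x' u)) := by
      apply hu2 (fun _ => u) (fun r => r) tendsto_id
      filter_upwards [self_mem_nhdsWithin] with r hr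
      simp only [one_mul]
      exact mem_closedBall_self (le_of_lt hr)
    have hT2 : ∀ᶠ r in 𝓝[>] (0:ℝ), (⨍ y in closedBall u r,
        (Ioo (t₀ - δ) (t₀ + δ)).indicator x' y)
        = (2 * r)⁻¹ • (z (u + r) - z (u - r)) := by
      filter_upwards [Ioc_mem_nhdsGT_of_mem ⟨le_refl (0:ℝ), hρu0⟩] with r hr
      obtain ⟨hr0, hrρ⟩ := hr
      have hIcc : Icc (u - r) (u + r) ⊆ Ioo (t₀ - δ) (t₀ + δ) := by
        intro v hv
        apply hρuJ
        rw [Real.closedBall_eq_Icc]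
        exact Icc_subset_Icc (by linarith) (by linarith) hv
      have hm1 : u - r ∈ Ioo (t₀ - δ) (t₀ + δ) := hIcc ⟨le_rfl, by linarith⟩
      have hm2 : u + r ∈ Ioo (t₀ - δ) (t₀ + δ) := hIcc ⟨by linarith, le_rfl⟩
      rw [setAverage_eq, setIntegral_indicator measurableSet_Ioo]
      have hinter : closedBall u r ∩ Ioo (t₀ - δ) (t₀ + δ) = Icc (u - r) (u + r) := by
        rw [Real.closedBall_eq_Icc]
        exact inter_eq_left.2 hIcc
      rw [hinter, Real.volume_real_closedBall (by linarith)]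
      rw [integral_Icc_eq_integral_Ioc, ← intervalIntegral.integral_of_le (by linarith)]
      rw [hx'eq (u - r) hm1 (u + r) hm2]
      simp
    have hz'u : HasDerivAt z (w u (z u)) u := hu1 huJ
    have hslope := hasDerivAt_iff_tendsto_slope.1 hz'u
    have hmap1 : Filter.Tendsto (fun r : ℝ => u + r) (𝓝[>] 0) (𝓝[≠] u) := by
      rw [tendsto_nhdsWithin_iff]
      constructor
      · have h1 : Filter.Tendsto (fun r : ℝ => u + r) (𝓝 0) (𝓝 u) := by
          simpa using (continuous_add_left u).tendsto (0:ℝ)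
        exact h1.mono_left nhdsWithin_le_nhds
      · filter_upwards [self_mem_nhdsWithin] with r hr
        have : (0:ℝ) < r := hr
        simp only [mem_compl_iff, mem_singleton_iff]
        intro hcon
        have : u + r = u := hcon
        linarith
    have hmap2 : Filter.Tendsto (fun r : ℝ => u - r) (𝓝[>] 0) (𝓝[≠] u) := by
      rw [tendsto_nhdsWithin_iff]
      constructor
      · have h1 : Filter.Tendsto (fun r : ℝ => u - r) (𝓝 0) (𝓝 u) := by
          simpa using (continuous_sub_left u).tendsto (0:ℝ)
        exact h1.mono_left nhdsWithin_le_nhds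
      · filter_upwards [self_mem_nhdsWithin] with r hr
        have : (0:ℝ) < r := hr
        simp only [mem_compl_iff, mem_singleton_iff]
        intro hcon
        have : u - r = u := hcon
        linarith
    have hTp := hslope.comp hmap1
    have hTm := hslope.comp hmap2
    have hT3 : Filter.Tendsto (fun r : ℝ => (2 * r)⁻¹ • (z (u + r) - z (u - r))) (𝓝[>] 0)
        (𝓝 (w u (z u))) := by
      have hconv := ((hTp.add hTm).const_smul ((2:ℝ)⁻¹))
      have heq2 : (2:ℝ)⁻¹ • (w u (z u) + w u (z u)) = w u (z u) := by
        rw [← two_smul ℝ, smul_smul]; norm_num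
      rw [heq2] at hconv
      apply hconv.congr'
      filter_upwards [self_mem_nhdsWithin] with r hr
      have hr0 : (0:ℝ) < r := hr
      show (2:ℝ)⁻¹ • (slope z u (u + r) + slope z u (u - r)) = (2 * r)⁻¹ • (z (u + r) - z (u - r))
      rw [slope_def_module, slope_def_module]
      have e1 : u + r - u = r := by ring
      have e2 : u - r - u = -r := by ring
      rw [e1, e2, inv_neg, neg_smul, ← sub_eq_add_neg, ← smul_sub]
      have e3 : ((2 * r)⁻¹ : ℝ) = 2⁻¹ * r⁻¹ := by rw [mul_inv]
      rw [e3, ← smul_smul]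
      congr 1
      congr 1
      abel
    have := tendsto_nhds_unique (hT1.congr' hT2) hT3
    rwa [indicator_of_mem huJ] at this
  -- everywhere derivative
  refine ⟨hzcont, ?_⟩
  intro t ht
  have ht₀J : t₀ ∈ Ioo (t₀ - δ) (t₀ + δ) := by
    obtain ⟨h1, h2⟩ := ht
    constructor <;> linarith
  have hident : ∀ s ∈ Ioo (t₀ - δ) (t₀ + δ), z s = z t₀ + ∫ τ in t₀..s, w τ (z τ) := by
    intro s hs
    rw [hx'eq t₀ ht₀J s hs]
    congr 1
    apply intervalIntegral.integral_congr_ae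
    have hsub : Set.uIoc t₀ s ⊆ Ioo (t₀ - δ) (t₀ + δ) :=
      Ioc_subset_Icc_self.trans ((Set.ordConnected_Ioo).uIcc_subset ht₀J hs)
    filter_upwards [hae2] with τ hτ hτΙ
    exact hτ (hsub hτΙ)
  have hInt : IntervalIntegrable (fun τ => w τ (z τ)) volume t₀ t := by
    apply ContinuousOn.intervalIntegrable
    exact hG.mono ((Set.ordConnected_Ioo).uIcc_subset ht₀J ht)
  have hP : HasDerivAt (fun s => z t₀ + ∫ τ in t₀..s, w τ (z τ)) (w t (z t)) t := by
    apply HasDerivAt.const_add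
    exact intervalIntegral.integral_hasDerivAt_right hInt
      (ContinuousOn.stronglyMeasurableAtFilter isOpen_Ioo hG t ht)
      (hG.continuousAt (isOpen_Ioo.mem_nhds ht))
  apply hP.congr_of_eventuallyEq
  filter_upwards [isOpen_Ioo.mem_nhds ht] with s hs
  exact hident s hs

end Aux

/-- The intrinsic interface velocity `w = V_Σ n_Σ = -∂ₜd ∇ₓd` of a moving family of
hypersurfaces given by a (signed-distance type) level-set function `d` generates a
locally unique flow, which leaves the family `{d(t,·) = 0}` invariant. -/
theorem intrinsic_velocity_wellposed_and_invariant
    {n : ℕ} (U : Set (ℝ × EuclideanSpace ℝ (Fin n))) (hU : IsOpen U)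
    (d : ℝ × EuclideanSpace ℝ (Fin n) → ℝ) (hd : ContDiffOn ℝ 1 d U)
    (hgradC1 : ContDiffOn ℝ 1 (fun p : ℝ × EuclideanSpace ℝ (Fin n) =>
      gradient (fun y => d (p.1, y)) p.2) U)
    (hunit : ∀ p ∈ U, ‖gradient (fun y => d (p.1, y)) p.2‖ = 1)
    (w : ℝ → EuclideanSpace ℝ (Fin n) → EuclideanSpace ℝ (Fin n))
    (hw : ∀ t x, w t x = (-(deriv (fun s => d (s, x)) t)) • gradient (fun y => d (t, y)) x) :
    ∀ t₀ x₀, (t₀, x₀) ∈ U → d (t₀, x₀) = 0 →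
      ∃ δ > (0:ℝ), ∃ y : ℝ → EuclideanSpace ℝ (Fin n),
        IsIVPSol U w t₀ x₀ δ y ∧
        (∀ z : ℝ → EuclideanSpace ℝ (Fin n), IsIVPSol U w t₀ x₀ δ z →
          EqOn z y (Ioo (t₀ - δ) (t₀ + δ))) ∧
        ∀ t ∈ Ioo (t₀ - δ) (t₀ + δ), d (t, y t) = 0 := by
  intro t₀ x₀ hp₀ hd₀
  obtain ⟨ρ, hρ, L, C, hC0, hcylU, hlip, hbound, hcont⟩ :=
    aux_localData hU hd hgradC1 hunit hw hp₀
  set ε : ℝ := ρ / (C + 1) with hε_def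
  have hε : 0 < ε := div_pos hρ (by linarith)
  have hερ : ε ≤ ρ := by
    rw [hε_def]; apply div_le_self hρ.le; linarith
  have hCε : C * ε ≤ ρ := by
    have h1 : C * ε ≤ (C + 1) * ε := by nlinarith
    have h2 : (C + 1) * ε = ρ := by rw [hε_def]; field_simp
    linarith
  have hsubt : Icc (t₀ - ε) (t₀ + ε) ⊆ closedBall t₀ ρ := by
    intro t ht1
    rw [mem_Icc] at ht1
    rw [mem_closedBall, Real.dist_eq, abs_le]
    constructor <;> linarith [ht1.1, ht1.2]
  have hρa : ((Real.toNNReal ρ : ℝ≥0) : ℝ) = ρ := Real.coe_toNNReal _ hρ.le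
  have hCa : ((Real.toNNReal C : ℝ≥0) : ℝ) = C := Real.coe_toNNReal _ hC0
  have hPL : IsPicardLindelof w (tmin := t₀ - ε) (tmax := t₀ + ε)
      ⟨t₀, by constructor <;> linarith⟩ x₀ (Real.toNNReal ρ) 0 (Real.toNNReal C) L :=
    { lipschitzOnWith := fun t ht => by rw [hρa]; exact hlip t (hsubt ht)
      continuousOn := fun x hx => by rw [hρa] at hx; exact (hcont x hx).mono hsubt
      norm_le := fun t ht x hx => by
        rw [hρa] at hx; rw [hCa]; exact hbound (t, x) (Set.mk_mem_prod (hsubt ht) hx)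
      mul_max_le := by
        simp only [hρa, hCa, NNReal.coe_zero, sub_zero]
        rw [add_sub_cancel_left, sub_sub_cancel, max_self]
        exact hCε }
  obtain ⟨y, hy0', hy⟩ := hPL.exists_eq_forall_mem_Icc_hasDerivWithinAt₀
  have hy0 : y t₀ = x₀ := hy0'
  have hyIoo : ∀ t ∈ Ioo (t₀ - ε) (t₀ + ε), HasDerivAt y (w t (y t)) t := fun t ht =>
    (hy t (Ioo_subset_Icc_self ht)).hasDerivAt (Icc_mem_nhds ht.1 ht.2)
  have ht₀mem : t₀ ∈ Ioo (t₀ - ε) (t₀ + ε) := ⟨by linarith, by linarith⟩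
  -- choose δ such that the graph of y stays in U
  have hycont : ContinuousAt (fun t => (t, y t)) t₀ :=
    continuousAt_id.prodMk (hyIoo t₀ ht₀mem).continuousAt
  have hyU : ((t₀ : ℝ), y t₀) ∈ U := by rw [hy0]; exact hp₀
  have hUy : ∀ᶠ t in 𝓝 t₀, (t, y t) ∈ U := hycont.preimage_mem_nhds (hU.mem_nhds hyU)
  have hIooy : ∀ᶠ t in 𝓝 t₀, t ∈ Ioo (t₀ - ε) (t₀ + ε) := by
    filter_upwards [isOpen_Ioo.mem_nhds ht₀mem] with t ht
    exact ht
  obtain ⟨δ₁, hδ₁, hδ₁prop⟩ := Metric.eventually_nhds_iff.1 (hUy.and hIooy)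
  set δ : ℝ := δ₁ / 2 with hδ_def
  have hδ : 0 < δ := by positivity
  have hIccball : Icc (t₀ - δ) (t₀ + δ) ⊆ ball t₀ δ₁ := by
    intro t ht
    rw [mem_Icc] at ht
    rw [mem_ball, Real.dist_eq]
    have h1 : |t - t₀| ≤ δ := abs_le.2 ⟨by linarith, by linarith⟩
    have h2 : δ < δ₁ := by rw [hδ_def]; linarith
    linarith
  have hJsub : ∀ t ∈ Icc (t₀ - δ) (t₀ + δ), (t, y t) ∈ U ∧ t ∈ Ioo (t₀ - ε) (t₀ + ε) := by
    intro t ht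
    exact hδ₁prop (mem_ball.1 (hIccball ht))
  have hJIoo : Ioo (t₀ - δ) (t₀ + δ) ⊆ Icc (t₀ - δ) (t₀ + δ) := Ioo_subset_Icc_self
  have ht₀J : t₀ ∈ Ioo (t₀ - δ) (t₀ + δ) := ⟨by linarith, by linarith⟩
  have hyode : ∀ t ∈ Ioo (t₀ - δ) (t₀ + δ), HasDerivAt y (w t (y t)) t :=
    fun t ht => hyIoo t (hJsub t (hJIoo ht)).2
  have hycontJ : ContinuousOn y (Ioo (t₀ - δ) (t₀ + δ)) :=
    fun t ht => (hyode t ht).continuousAt.continuousWithinAt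
  -- continuity of the velocity along the graph of y on the ball
  have hyV : ContinuousOn y (ball t₀ δ₁) := fun t ht =>
    ((hyIoo t (hδ₁prop (mem_ball.1 ht)).2).continuousAt).continuousWithinAt
  have hGy : ContinuousOn (fun τ => w τ (y τ)) (ball t₀ δ₁) :=
    aux_contG hU hd hgradC1 hw isOpen_ball hyV (fun t ht => (hδ₁prop (mem_ball.1 ht)).1)
  have hyiv : IsIVPSol U w t₀ x₀ δ y := by
    refine ⟨hy0, fun t ht => (hJsub t (hJIoo ht)).1, ⟨fun u => w u (y u), ?_, ?_⟩, ?_⟩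
    · exact ((hGy.mono hIccball).integrableOn_Icc).mono_set Ioo_subset_Icc_self
    · intro s hs t ht
      have huIcc : uIcc s t ⊆ Ioo (t₀ - δ) (t₀ + δ) := ordConnected_Ioo.uIcc_subset hs ht
      have h := intervalIntegral.integral_eq_sub_of_hasDerivAt
        (f := y) (f' := fun u => w u (y u))
        (fun u hu => hyode u (huIcc hu))
        (ContinuousOn.intervalIntegrable
          (hGy.mono (huIcc.trans (hJIoo.trans hIccball))))
      rw [h]
      abel
    · exact (ae_restrict_iff' measurableSet_Ioo).2 (Filter.Eventually.of_forall hyode)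
  refine ⟨δ, hδ, y, hyiv, ?_, ?_⟩
  · -- uniqueness
    intro z hziv
    classical
    obtain ⟨hzcont, hzode⟩ := aux_upgrade hU hd hgradC1 hw hziv
    obtain ⟨hz0, hzU, -, -⟩ := hziv
    haveI : PreconnectedSpace (Ioo (t₀ - δ) (t₀ + δ) : Set ℝ) :=
      Subtype.preconnectedSpace isPreconnected_Ioo
    set S : Set (Ioo (t₀ - δ) (t₀ + δ) : Set ℝ) := {a | z a.1 = y a.1} with hS_def
    have hSclosed : IsClosed S := isClosed_eq hzcont.restrict hycontJ.restrict
    have hSopen : IsOpen S := by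
      rw [isOpen_iff_mem_nhds]
      rintro ⟨a, haJ⟩ haS
      have hzya : z a = y a := haS
      have haU : ((a : ℝ), y a) ∈ U := (hJsub a (hJIoo haJ)).1
      obtain ⟨ρa, hρa, La, Ca, -, -, hlipa, -, -⟩ :=
        aux_localData hU hd hgradC1 hunit hw haU
      have hv : ∀ t, LipschitzOnWith La (w t)
          (if t ∈ closedBall a ρa then closedBall (y a) ρa else (∅ : Set (EuclideanSpace ℝ (Fin n)))) := by
        intro t
        by_cases h : t ∈ closedBall a ρa
        · rw [if_pos h]; exact hlipa t h
        · rw [if_neg h]; exact lipschitzOnWith_empty _ _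
      have hcbz : closedBall (y a) ρa ∈ 𝓝 (z a) := by
        rw [hzya]
        exact Filter.mem_of_superset (ball_mem_nhds _ hρa) ball_subset_closedBall
      have hcby : closedBall (y a) ρa ∈ 𝓝 (y a) :=
        Filter.mem_of_superset (ball_mem_nhds _ hρa) ball_subset_closedBall
      have hzb : ∀ᶠ t in 𝓝 a, z t ∈ closedBall (y a) ρa :=
        (hzcont.continuousAt (isOpen_Ioo.mem_nhds haJ)).preimage_mem_nhds hcbz
      have hyb : ∀ᶠ t in 𝓝 a, y t ∈ closedBall (y a) ρa :=
        ((hyode a haJ).continuousAt).preimage_mem_nhds hcby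
      have hJb : ∀ᶠ t in 𝓝 a, t ∈ Ioo (t₀ - δ) (t₀ + δ) := by
        filter_upwards [isOpen_Ioo.mem_nhds haJ] with t ht
        exact ht
      have hab : ∀ᶠ t in 𝓝 a, t ∈ closedBall a ρa := by
        filter_upwards [Metric.ball_mem_nhds a hρa] with t ht
        exact ball_subset_closedBall ht
      obtain ⟨η, hη, hηprop⟩ :=
        Metric.eventually_nhds_iff.1 ((hzb.and (hyb.and (hJb.and hab))))
      have hEq : EqOn z y (Ioo (a - η) (a + η)) := by
        apply ODE_solution_unique_of_mem_Ioo (fun t _ => hv t) (t₀ := a) ⟨by linarith, by linarith⟩ ?_ ?_ hzya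
        · intro t htI
          have hdt : dist t a < η := by
            rw [Real.dist_eq, abs_lt]
            rw [mem_Ioo] at htI
            constructor <;> linarith [htI.1, htI.2]
          obtain ⟨h1, h2, h3, h4⟩ := hηprop hdt
          refine ⟨hzode t h3, ?_⟩
          rw [if_pos h4]
          exact h1
        · intro t htI
          have hdt : dist t a < η := by
            rw [Real.dist_eq, abs_lt]
            rw [mem_Ioo] at htI
            constructor <;> linarith [htI.1, htI.2]
          obtain ⟨h1, h2, h3, h4⟩ := hηprop hdt
          refine ⟨hyode t h3, ?_⟩
          rw [if_pos h4]
          exact h2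
      have hmem : {t : ℝ | z t = y t} ∈ 𝓝 (a : ℝ) :=
        Filter.mem_of_superset (Ioo_mem_nhds (by linarith) (by linarith)) hEq
      rw [nhds_subtype_eq_comap]
      exact Filter.preimage_mem_comap hmem
    have hSuniv : S = univ :=
      IsClopen.eq_univ ⟨hSclosed, hSopen⟩ ⟨⟨t₀, ht₀J⟩, hz0.trans hy0.symm⟩
    intro t ht
    have : (⟨t, ht⟩ : (Ioo (t₀ - δ) (t₀ + δ) : Set ℝ)) ∈ S := by
      rw [hSuniv]; exact mem_univ _
    exact this
  · -- invariance
    have hφd : ∀ s ∈ Ioo (t₀ - δ) (t₀ + δ), HasDerivAt (fun τ => d (τ, y τ)) 0 s := by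
      intro s hs
      have hsU : ((s : ℝ), y s) ∈ U := (hJsub s (hJIoo hs)).1
      have hγ : HasDerivAt (fun τ => ((τ : ℝ), y τ)) ((1:ℝ), w s (y s)) s :=
        (hasDerivAt_id s).prodMk (hyode s hs)
      have hdiff : DifferentiableAt ℝ d (s, y s) :=
        (hd.contDiffAt (hU.mem_nhds hsU)).differentiableAt one_ne_zero
      have hcomp := hdiff.hasFDerivAt.comp_hasDerivAt s hγ
      have hval : fderiv ℝ d (s, y s) (1, w s (y s)) = 0 := by
        have hgp : HasGradientAt (fun y' => d (s, y'))
            (gradient (fun y' => d (s, y')) (y s)) (y s) := (aux_gradient hU hd hsU).1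
        have hinner' : (inner ℝ (gradient (fun y' => d (s, y')) (y s)) (w s (y s)) : ℝ)
            = fderiv ℝ d (s, y s) (0, w s (y s)) := (aux_gradient hU hd hsU).2 (w s (y s))
        have hwv' : w s (y s)
            = (-(fderiv ℝ d (s, y s) (1, 0))) • gradient (fun y' => d (s, y')) (y s) :=
          aux_w_eq hU hd hw hsU
        have hsplit : ((1:ℝ), w s (y s))
            = ((1:ℝ), (0 : EuclideanSpace ℝ (Fin n))) + ((0:ℝ), w s (y s)) := by
          rw [Prod.mk_add_mk, add_zero, zero_add]
        rw [hsplit, map_add, ← hinner']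
        rw [hwv']
        rw [real_inner_smul_right]
        have hn' : ‖gradient (fun y' => d (s, y')) (y s)‖ = 1 := hunit (s, y s) hsU
        rw [real_inner_self_eq_norm_sq, hn']
        ring
      rw [hval] at hcomp
      exact hcomp
    intro t ht
    rcases le_or_gt t₀ t with hle | hlt
    · have hIccsub : Icc t₀ t ⊆ Ioo (t₀ - δ) (t₀ + δ) := by
        rw [← uIcc_of_le hle]
        exact ordConnected_Ioo.uIcc_subset ht₀J ht
      have hconst := constant_of_has_deriv_right_zero
        (f := fun τ => d (τ, y τ)) (a := t₀) (b := t)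
        (fun τ hτ => (hφd τ (hIccsub hτ)).continuousAt.continuousWithinAt)
        (fun τ hτ => (hφd τ (hIccsub (Ico_subset_Icc_self hτ))).hasDerivWithinAt)
        t ⟨hle, le_rfl⟩
      have hconst' : d (t, y t) = d (t₀, y t₀) := hconst
      rw [hconst', hy0]
      exact hd₀
    · have hIccsub : Icc t t₀ ⊆ Ioo (t₀ - δ) (t₀ + δ) := by
        rw [← uIcc_of_le hlt.le]
        exact ordConnected_Ioo.uIcc_subset ht ht₀J
      have hconst := constant_of_has_deriv_right_zero
        (f := fun τ => d (τ, y τ)) (a := t) (b := t₀)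
        (fun τ hτ => (hφd τ (hIccsub hτ)).continuousAt.continuousWithinAt)
        (fun τ hτ => (hφd τ (hIccsub (Ico_subset_Icc_self hτ))).hasDerivWithinAt)
        t₀ ⟨hlt.le, le_rfl⟩
      have hconst' : d (t₀, y t₀) = d (t, y t) := hconst
      rw [hy0] at hconst'
      rw [← hconst']
      exact hd₀
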